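/- arXiv:2511.12412 — 3 statements merged into one kernel-verified Lean document; each statement's English description precedes it below -/
import Mathlib

section
/- Let α, β, γ be real numbers with 0 < |α| < 1 < |β| and γ ≠ 0. Then for every ε > 0 and every n₀ ∈ ℕ there exist real numbers ᾱ ∈ (α − ε, α + ε) and β̄ ∈ (β − ε, β + ε) and natural numbers m₁, n₁ > n₀ such that ᾱ^{m₁} · β̄^{n₁} = |γ|. -/
set_option maxHeartbeats 1000000 in
/-- Claim used to tune eigenvalue products: with `0 < |α| < 1 < |β|` and `γ ≠ 0`,
for every `ε > 0` and `n₀` there are `ᾱ` and `β'` that are `ε`-close to `α` and `β`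
and exponents `m₁, n₁ > n₀` with `ᾱ ^ m₁ * β' ^ n₁ = |γ|`. -/
theorem stmt0 (α β γ : ℝ) (hα1 : |α| ≠ 1) (hβ1 : |β| ≠ 1) (hγ : γ ≠ 0)
    (hα0 : 0 < |α|) (hα : |α| < 1) (hβ : 1 < |β|) :
    ∀ ε > 0, ∀ n₀ : ℕ, ∃ αbar βbar : ℝ,
      αbar ∈ Set.Ioo (α - ε) (α + ε) ∧ βbar ∈ Set.Ioo (β - ε) (β + ε) ∧
      ∃ m₁ n₁ : ℕ, n₀ < m₁ ∧ n₀ < n₁ ∧ αbar ^ m₁ * βbar ^ n₁ = |γ| := by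
  intro ε hε n₀
  have hc : 0 < |γ| := abs_pos.mpr hγ
  have hL : Real.log |α| < 0 := Real.log_neg hα0 hα
  have hM : 0 < Real.log |β| := Real.log_pos hβ
  set L := Real.log |α| with hLdef
  set M := Real.log |β| with hMdef
  have hnegL : 0 < -L := by linarith
  -- continuity of exp at L
  obtain ⟨δ, hδ0, hδ⟩ := Metric.continuousAt_iff.mp
    (Real.continuous_exp.continuousAt : ContinuousAt Real.exp L) ε hε
  have hT0 : 0 ≤ 2 * (-L) ^ 2 / δ := by positivity
  obtain ⟨k, hk⟩ := exists_nat_gt (max (n₀ : ℝ)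
    ((Real.log |γ| + ((-L) * ((n₀ : ℝ) + 1) + 2 * (-L) ^ 2 / δ)) / (2 * M)))
  set n₁ := 2 * k with hn₁
  have hkn : (n₀ : ℝ) < k := lt_of_le_of_lt (le_max_left _ _) hk
  have hn₀n₁ : n₀ < n₁ := by
    have : n₀ < k := by exact_mod_cast hkn
    omega
  set S : ℝ := (n₁ : ℝ) * M - Real.log |γ| with hS
  have hSC : (-L) * ((n₀ : ℝ) + 1) + 2 * (-L) ^ 2 / δ < S := by
    have h2 : (Real.log |γ| + ((-L) * ((n₀ : ℝ) + 1) + 2 * (-L) ^ 2 / δ)) / (2 * M) < k :=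
      lt_of_le_of_lt (le_max_right _ _) hk
    have h3 : Real.log |γ| + ((-L) * ((n₀ : ℝ) + 1) + 2 * (-L) ^ 2 / δ) < k * (2 * M) :=
      (div_lt_iff₀ (by positivity)).mp h2
    have h4 : ((n₁ : ℝ)) = 2 * k := by exact_mod_cast rfl
    rw [hS, h4]; nlinarith
  have hS0 : 0 < S := by nlinarith [Nat.cast_nonneg (α := ℝ) n₀]
  set x : ℝ := S / (2 * (-L)) with hx
  have hx0 : 0 ≤ x := by positivity
  have hxS : x * (2 * (-L)) = S := div_mul_cancel₀ S (by positivity)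
  set m₁ := 2 * ⌈x⌉₊ with hm₁
  have hceil1 : x ≤ (⌈x⌉₊ : ℝ) := Nat.le_ceil x
  have hceil2 : (⌈x⌉₊ : ℝ) < x + 1 := Nat.ceil_lt_add_one hx0
  have hm₁cast : (m₁ : ℝ) = 2 * (⌈x⌉₊ : ℝ) := by exact_mod_cast rfl
  have hm₁even : Even m₁ := ⟨⌈x⌉₊, by rw [hm₁]; omega⟩
  have hn₁even : Even n₁ := ⟨k, by rw [hn₁]; omega⟩
  clear_value m₁ n₁ x S
  clear hm₁ hn₁ hx
  have hA : S ≤ (m₁ : ℝ) * (-L) := by rw [hm₁cast]; nlinarith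
  have hB : (m₁ : ℝ) * (-L) < S + 2 * (-L) := by rw [hm₁cast]; nlinarith
  have hm₁n₀ : (n₀ : ℝ) + 1 ≤ (m₁ : ℝ) := by nlinarith
  have hn₀m₁ : n₀ < m₁ := by
    have h : (n₀ : ℝ) < (m₁ : ℝ) := by linarith
    exact Nat.cast_lt.mp h
  have hm₁pos : 0 < (m₁ : ℝ) := by
    have := Nat.cast_nonneg (α := ℝ) n₀; linarith
  have hδm : 2 * (-L) < δ * (m₁ : ℝ) := by
    have h2 : 2 * (-L) ^ 2 / δ * δ = 2 * (-L) ^ 2 := div_mul_cancel₀ _ (ne_of_gt hδ0)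
    nlinarith [Nat.cast_nonneg (α := ℝ) n₀]
  set t : ℝ := (Real.log |γ| - (n₁ : ℝ) * M) / m₁ with ht
  have htL : |t - L| < δ := by
    have heq : t - L = ((m₁ : ℝ) * (-L) - S) / m₁ := by
      rw [ht, hS]; field_simp; ring
    rw [heq, abs_div, abs_of_pos hm₁pos, div_lt_iff₀ hm₁pos, abs_lt]
    constructor <;> nlinarith
  have hexp : |Real.exp t - (|α|)| < ε := by
    have := hδ (show dist t L < δ by simpa [Real.dist_eq] using htL)
    rw [Real.dist_eq, hLdef, Real.exp_log hα0] at this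
    exact this
  set a' := Real.exp t with ha'
  have hprod : a' ^ m₁ * |β| ^ n₁ = |γ| := by
    have hb0 : 0 < |β| := lt_trans one_pos hβ
    have h1 : a' ^ m₁ = Real.exp ((m₁ : ℝ) * t) := (Real.exp_nat_mul t m₁).symm
    have h2 : |β| ^ n₁ = Real.exp ((n₁ : ℝ) * M) := by
      rw [hMdef, Real.exp_nat_mul, Real.exp_log hb0]
    rw [h1, h2, ← Real.exp_add]
    have h3 : (m₁ : ℝ) * t = Real.log |γ| - (n₁ : ℝ) * M := by
      rw [ht, mul_div_cancel₀ _ (ne_of_gt hm₁pos)]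
    rw [h3]
    rw [show Real.log |γ| - (n₁:ℝ) * M + (n₁:ℝ) * M = Real.log |γ| by ring, Real.exp_log hc]
  refine ⟨if 0 ≤ α then a' else -a', β, ?_, ?_, m₁, n₁, hn₀m₁, hn₀n₁, ?_⟩
  · rcases le_or_gt 0 α with h | h
    · simp only [if_pos h]
      rw [abs_of_nonneg h] at hexp
      obtain ⟨h1, h2⟩ := abs_lt.mp hexp
      exact ⟨by linarith, by linarith⟩
    · simp only [if_neg (not_le.mpr h)]
      rw [abs_of_neg h] at hexp
      obtain ⟨h1, h2⟩ := abs_lt.mp hexp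
      exact ⟨by linarith, by linarith⟩
  · exact ⟨by linarith, by linarith⟩
  · have hαpow : (if 0 ≤ α then a' else -a') ^ m₁ = a' ^ m₁ := by
      rcases le_or_gt 0 α with h | h
      · simp [h]
      · simp only [if_neg (not_le.mpr h)]
        exact hm₁even.neg_pow a'
    have hβpow : β ^ n₁ = |β| ^ n₁ := by
      rw [← abs_pow, abs_of_nonneg (hn₁even.pow_nonneg β)]
    rw [hαpow, hβpow, hprod]
end

section
/- Let N₁, N₂ be manifolds with (p,q)-pairs 𝔛_τ = (P_τ, Q_τ) (C¹ maps P_τ : N_τ → ℝ^p, Q_τ : N_τ → ℝ^q), U ⊆ N₁ open, f : U → N₂ a C¹ embedding, R ⊆ U, and μ, γ > 0. If f satisfies the (𝔛₁, 𝔛₂, θ, μ, γ)-cone condition on R for every θ > 0 (i.e. f is (𝔛₁,𝔛₂,μ,γ)-dominated on R), then for every x ∈ R: (i) for every v ∈ T_x U with v ∉ Ker D_x(P₂ ∘ f), ‖D(P₂ ∘ f)(v)‖ < μ⁻¹ ‖DP₁(v)‖; and (ii) for every w ∈ T_x U with w ∉ Ker D_x Q₁, ‖D(Q₂ ∘ f)(w)‖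 > γ ‖DQ₁(w)‖. -/
open Set

noncomputable section

/-- The `(𝔖,θ)`-cone at `x` for the pair `𝔖 = (P,Q)`:
vectors `v` with `‖D_x Q (v)‖ ≤ θ ‖D_x P (v)‖`. -/
def coneSet {E F G : Type*} [NormedAddCommGroup E] [NormedSpace ℝ E]
    [NormedAddCommGroup F] [NormedSpace ℝ F] [NormedAddCommGroup G] [NormedSpace ℝ G]
    (P : E → F) (Q : E → G) (θ : ℝ) (x : E) : Set E :=
  {v | ‖fderiv ℝ Q x v‖ ≤ θ * ‖fderiv ℝ P x v‖}

variable {E₁ E₂ F G : Type*}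
  [NormedAddCommGroup E₁] [NormedSpace ℝ E₁]
  [NormedAddCommGroup E₂] [NormedSpace ℝ E₂]
  [NormedAddCommGroup F] [NormedSpace ℝ F]
  [NormedAddCommGroup G] [NormedSpace ℝ G]

/-- The `(𝔛₁,𝔛₂,θ)`-cone invariance condition on `R`, with explicit inner width `θ'`:
`Df⁻¹(C_θ(f x, 𝔛₂)) ⊆ C_{θ'}(x,𝔛₁)` and `Df(C_θ(x,𝔛₁ᵗ)) ⊆ C_{θ'}(f x,𝔛₂ᵗ)`. -/
def ConeInvarianceWith (P₁ : E₁ → F) (Q₁ : E₁ → G) (P₂ : E₂ → F) (Q₂ : E₂ → G)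
    (f : E₁ → E₂) (R : Set E₁) (θ' θ : ℝ) : Prop :=
  0 < θ' ∧ θ' < θ ∧ ∀ x ∈ R,
    ⇑(fderiv ℝ f x) ⁻¹' coneSet P₂ Q₂ θ (f x) ⊆ coneSet P₁ Q₁ θ' x ∧
    ⇑(fderiv ℝ f x) '' coneSet Q₁ P₁ θ x ⊆ coneSet Q₂ P₂ θ' (f x)

/-- The `(𝔛₁,𝔛₂,θ,μ,γ)`-dilatation condition on `R`. -/
def DilatationCond (P₁ : E₁ → F) (Q₁ : E₁ → G) (P₂ : E₂ → F) (Q₂ : E₂ → G)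
    (f : E₁ → E₂) (R : Set E₁) (θ μ γ : ℝ) : Prop :=
  ∀ x ∈ R,
    (∀ v : E₁, fderiv ℝ f x v ∈ coneSet P₂ Q₂ θ (f x) → fderiv ℝ f x v ≠ 0 →
      μ * ‖fderiv ℝ P₂ (f x) (fderiv ℝ f x v)‖ < ‖fderiv ℝ P₁ x v‖) ∧
    (∀ v ∈ coneSet Q₁ P₁ θ x, v ≠ (0 : E₁) →
      γ * ‖fderiv ℝ Q₁ x v‖ < ‖fderiv ℝ Q₂ (f x) (fderiv ℝ f x v)‖)

/-- The `(𝔛₁,𝔛₂,θ,μ,γ)`-cone condition on `R`. -/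
def ConeCondition (P₁ : E₁ → F) (Q₁ : E₁ → G) (P₂ : E₂ → F) (Q₂ : E₂ → G)
    (f : E₁ → E₂) (R : Set E₁) (θ μ γ : ℝ) : Prop :=
  (∃ θ', ConeInvarianceWith P₁ Q₁ P₂ Q₂ f R θ' θ) ∧
  DilatationCond P₁ Q₁ P₂ Q₂ f R θ μ γ

theorem exists_pos_mem_coneSet {E F G : Type*} [NormedAddCommGroup E] [NormedSpace ℝ E]
    [NormedAddCommGroup F] [NormedSpace ℝ F] [NormedAddCommGroup G] [NormedSpace ℝ G]
    (P : E → F) (Q : E → G) {x v : E} (hv : fderiv ℝ P x v ≠ 0) :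
    ∃ θ > 0, v ∈ coneSet P Q θ x := by
  have hP : 0 < ‖fderiv ℝ P x v‖ := norm_pos_iff.mpr hv
  refine ⟨‖fderiv ℝ Q x v‖ / ‖fderiv ℝ P x v‖ + 1, by positivity, ?_⟩
  change ‖fderiv ℝ Q x v‖ ≤ (‖fderiv ℝ Q x v‖ / ‖fderiv ℝ P x v‖ + 1) * ‖fderiv ℝ P x v‖
  rw [add_one_mul, div_mul_cancel₀ _ hP.ne']
  exact le_add_of_nonneg_right (norm_nonneg _)

section Dominated

variable {P₁ : E₁ → F} {Q₁ : E₁ → G} {P₂ : E₂ → F} {Q₂ : E₂ → G} {f : E₁ → E₂} {R : Set E₁}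
  {μ γ : ℝ} {x : E₁}

theorem mul_norm_fderiv_P_lt_of_forall_dilatationCond
    (hdil : ∀ θ > 0, DilatationCond P₁ Q₁ P₂ Q₂ f R θ μ γ) (hx : x ∈ R) {v : E₁}
    (hv : fderiv ℝ P₂ (f x) (fderiv ℝ f x v) ≠ 0) :
    μ * ‖fderiv ℝ P₂ (f x) (fderiv ℝ f x v)‖ < ‖fderiv ℝ P₁ x v‖ := by
  obtain ⟨θ, hθ, hcone⟩ := exists_pos_mem_coneSet P₂ Q₂ hv
  exact ((hdil θ hθ x hx).1 v hcone) fun h ↦ hv (by rw [h, map_zero])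

theorem mul_norm_fderiv_Q_lt_of_forall_dilatationCond
    (hdil : ∀ θ > 0, DilatationCond P₁ Q₁ P₂ Q₂ f R θ μ γ) (hx : x ∈ R) {w : E₁}
    (hw : fderiv ℝ Q₁ x w ≠ 0) :
    γ * ‖fderiv ℝ Q₁ x w‖ < ‖fderiv ℝ Q₂ (f x) (fderiv ℝ f x w)‖ := by
  obtain ⟨θ, hθ, hcone⟩ := exists_pos_mem_coneSet Q₁ P₁ hw
  exact ((hdil θ hθ x hx).2 w hcone) fun h ↦ hw (by rw [h, map_zero])

end Dominated

theorem stmt4_general (P₁ : E₁ → F) (Q₁ : E₁ → G) (P₂ : E₂ → F) (Q₂ : E₂ → G)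
    (U : Set E₁) (hU : IsOpen U) (f : E₁ → E₂)
    (hf : ContDiffOn ℝ 1 f U)
    (hP₂ : Differentiable ℝ P₂) (hQ₂ : Differentiable ℝ Q₂)
    (R : Set E₁) (hR : R ⊆ U) (μ γ : ℝ) (hμ : 0 < μ)
    (hdom : ∀ θ > 0, ConeCondition P₁ Q₁ P₂ Q₂ f R θ μ γ) :
    (∀ x ∈ R, ∀ v : E₁, fderiv ℝ (P₂ ∘ f) x v ≠ 0 →
        ‖fderiv ℝ (P₂ ∘ f) x v‖ < μ⁻¹ * ‖fderiv ℝ P₁ x v‖) ∧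
    (∀ x ∈ R, ∀ w : E₁, fderiv ℝ Q₁ x w ≠ 0 →
        γ * ‖fderiv ℝ Q₁ x w‖ < ‖fderiv ℝ (Q₂ ∘ f) x w‖) := by
  have hdil : ∀ θ > 0, DilatationCond P₁ Q₁ P₂ Q₂ f R θ μ γ := fun θ hθ ↦ (hdom θ hθ).2
  have hfx : ∀ x ∈ R, DifferentiableAt ℝ f x := fun x hx ↦
    (hf.differentiableOn one_ne_zero).differentiableAt (hU.mem_nhds (hR hx))
  refine ⟨fun x hx v hv ↦ ?_, fun x hx w hw ↦ ?_⟩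
  · rw [fderiv_comp x (hP₂ (f x)) (hfx x hx), ContinuousLinearMap.comp_apply] at hv ⊢
    rw [lt_inv_mul_iff₀ hμ]
    exact mul_norm_fderiv_P_lt_of_forall_dilatationCond hdil hx hv
  · rw [fderiv_comp x (hQ₂ (f x)) (hfx x hx), ContinuousLinearMap.comp_apply]
    exact mul_norm_fderiv_Q_lt_of_forall_dilatationCond hdil hx hw

/-- If a `C¹` embedding `f` is `(𝔛₁,𝔛₂,μ,γ)`-dominated on `R` (i.e. satisfies the
cone condition for every `θ > 0`), then pointwise
`‖D(P₂∘f)(v)‖ < μ⁻¹‖DP₁(v)‖` off `Ker D(P₂∘f)` and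
`‖D(Q₂∘f)(w)‖ > γ‖DQ₁(w)‖` off `Ker DQ₁`. -/
theorem stmt4 (P₁ : E₁ → F) (Q₁ : E₁ → G) (P₂ : E₂ → F) (Q₂ : E₂ → G)
    (U : Set E₁) (hU : IsOpen U) (f : E₁ → E₂)
    (hf : ContDiffOn ℝ 1 f U) (hfinj : InjOn f U)
    (hDf : ∀ x ∈ U, Function.Injective (fderiv ℝ f x))
    (hP₁ : Differentiable ℝ P₁) (hQ₁ : Differentiable ℝ Q₁)
    (hP₂ : Differentiable ℝ P₂) (hQ₂ : Differentiable ℝ Q₂)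
    (R : Set E₁) (hR : R ⊆ U) (μ γ : ℝ) (hμ : 0 < μ) (hγ : 0 < γ)
    (hdom : ∀ θ > 0, ConeCondition P₁ Q₁ P₂ Q₂ f R θ μ γ) :
    (∀ x ∈ R, ∀ v : E₁, fderiv ℝ (P₂ ∘ f) x v ≠ 0 →
        ‖fderiv ℝ (P₂ ∘ f) x v‖ < μ⁻¹ * ‖fderiv ℝ P₁ x v‖) ∧
    (∀ x ∈ R, ∀ w : E₁, fderiv ℝ Q₁ x w ≠ 0 →
        γ * ‖fderiv ℝ Q₁ x w‖ < ‖fderiv ℝ (Q₂ ∘ f) x w‖) :=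
  stmt4_general P₁ Q₁ P₂ Q₂ U hU f hf hP₂ hQ₂ R hR μ γ hμ hdom
end
end

section
/- Let Z, {R_i}_{i∈I} be subsets of a manifold N, let P_cs : N → ℝ^{d_cs} and let 𝔠 = (P_s, P_c) be a (d_s, d_c)-splitting of ℝ^{d_cs} (so 𝔠 is a diffeomorphism onto its image and d_cs = d_s + d_c). Assume: (a) for every i ∈ I, P_cs(R_i) is a 𝔠-rectangle and P_s(P_cs(Z))‾ ⊆ int(P_s∘P_cs(R_i)); (b) {int(P_c∘P_cs(R_i))}_{i∈I} covers the closure of P_c∘P_cs(Z), with Lebesgue number Δ. Then for every set K ⊆ closure(P_cs(Z)) with diam(P_c(K)) < Δ there exists i ∈ I with K ⊆ int(P_cs(R_i)). -/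
/-! A point of `closure (P_cs Z)` projects into `int (P_s R_i)` by (a) and, if `K` is small,
into `int (P_c R_i)` by the Lebesgue number. Since `P_cs R_i` is a rectangle, the open set
`𝔠⁻¹ (int (P_s R_i) × int (P_c R_i))` lies in `P_cs R_i`, so the point is interior to it. -/

/-- `R` is an `(P,Q)`-rectangle: `(P,Q)` maps `R` bijectively onto `P(R) × Q(R)`. -/
def IsRectangle {E F G : Type*} (P : E → F) (Q : E → G) (R : Set E) : Prop :=
  Set.InjOn (fun x => (P x, Q x)) R ∧
    (fun x => (P x, Q x)) '' R = (P '' R) ×ˢ (Q '' R)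

namespace IsRectangle

variable {X Y W : Type*} {P : X → Y} {Q : X → W} {S : Set X}

theorem preimage_prod_image_subset (hinj : Function.Injective fun x => (P x, Q x))
    (hS : IsRectangle P Q S) : (fun x => (P x, Q x)) ⁻¹' ((P '' S) ×ˢ (Q '' S)) ⊆ S := by
  intro y hy
  rw [Set.mem_preimage, ← hS.2] at hy
  obtain ⟨z, hz, hzy⟩ := hy
  rwa [← hinj hzy]

theorem mem_interior_of_mem_interior_images [TopologicalSpace X] [TopologicalSpace Y]
    [TopologicalSpace W] (hcont : Continuous fun x => (P x, Q x))
    (hinj : Function.Injective fun x => (P x, Q x)) (hS : IsRectangle P Q S) {x : X}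
    (hP : P x ∈ interior (P '' S)) (hQ : Q x ∈ interior (Q '' S)) : x ∈ interior S :=
  interior_maximal
    ((Set.preimage_mono (Set.prod_mono interior_subset interior_subset)).trans
      (hS.preimage_prod_image_subset hinj))
    ((isOpen_interior.prod isOpen_interior).preimage hcont) ⟨hP, hQ⟩

end IsRectangle

theorem stmt9_general {E : Type*} {ι : Type*}
    (dcs ds dc : ℕ)
    (Pcs : E → (Fin dcs → ℝ))
    (Ps : (Fin dcs → ℝ) → (Fin ds → ℝ)) (Pc : (Fin dcs → ℝ) → (Fin dc → ℝ))
    (hc_cont : Continuous (fun x => (Ps x, Pc x)))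
    (hc_inj : Function.Injective (fun x => (Ps x, Pc x)))
    (Z : Set E) (R : ι → Set E) (Δ : ℝ)
    (hrect : ∀ i, IsRectangle Ps Pc (Pcs '' R i))
    (hbm3 : ∀ i, closure (Ps '' (Pcs '' Z)) ⊆ interior (Ps '' (Pcs '' R i)))
    (hLeb : ∀ K : Set (Fin dc → ℝ), K ⊆ closure (Pc '' (Pcs '' Z)) →
      Metric.diam K < Δ → ∃ i, K ⊆ interior (Pc '' (Pcs '' R i))) :
    ∀ K : Set (Fin dcs → ℝ), K ⊆ closure (Pcs '' Z) →
      Metric.diam (Pc '' K) < Δ → ∃ i, K ⊆ interior (Pcs '' R i) := by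
  intro K hKZ hKdiam
  have hPcK : Pc '' K ⊆ closure (Pc '' (Pcs '' Z)) :=
    (Set.image_mono hKZ).trans (image_closure_subset_closure_image hc_cont.snd)
  obtain ⟨i, hi⟩ := hLeb (Pc '' K) hPcK hKdiam
  refine ⟨i, fun x hx => (hrect i).mem_interior_of_mem_interior_images hc_cont hc_inj ?_
    (hi ⟨x, hx, rfl⟩)⟩
  exact hbm3 i (image_closure_subset_closure_image hc_cont.fst ⟨x, hKZ hx, rfl⟩)

/-- Covering lemma for split blending machines: if each `P_cs(R_i)` is a
`𝔠 = (P_s,P_c)`-rectangle with `closure (P_s∘P_cs(Z)) ⊆ int (P_s∘P_cs(R_i))`, and the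
central projections `{int (P_c∘P_cs(R_i))}` cover `closure (P_c∘P_cs(Z))` with
Lebesgue number `Δ`, then every `K ⊆ closure (P_cs(Z))` with `diam (P_c(K)) < Δ` is
contained in `int (P_cs(R_i))` for some `i`. -/
theorem stmt9 {E : Type*} {ι : Type*} [Finite ι] [Nonempty ι]
    (dcs ds dc : ℕ)
    (Pcs : E → (Fin dcs → ℝ))
    (Ps : (Fin dcs → ℝ) → (Fin ds → ℝ)) (Pc : (Fin dcs → ℝ) → (Fin dc → ℝ))
    (hc_cont : Continuous (fun x => (Ps x, Pc x)))
    (hc_inj : Function.Injective (fun x => (Ps x, Pc x)))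
    (hc_open : IsOpenMap (fun x => (Ps x, Pc x)))
    (Z : Set E) (R : ι → Set E) (Δ : ℝ) (hΔpos : 0 < Δ)
    (hrect : ∀ i, IsRectangle Ps Pc (Pcs '' R i))
    (hbm3 : ∀ i, closure (Ps '' (Pcs '' Z)) ⊆ interior (Ps '' (Pcs '' R i)))
    (hcover : closure (Pc '' (Pcs '' Z)) ⊆ ⋃ i, interior (Pc '' (Pcs '' R i)))
    (hLeb : ∀ K : Set (Fin dc → ℝ), K ⊆ closure (Pc '' (Pcs '' Z)) →
      Metric.diam K < Δ → ∃ i, K ⊆ interior (Pc '' (Pcs '' R i))) :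
    ∀ K : Set (Fin dcs → ℝ), K ⊆ closure (Pcs '' Z) →
      Metric.diam (Pc '' K) < Δ → ∃ i, K ⊆ interior (Pcs '' R i) :=
  stmt9_general dcs ds dc Pcs Ps Pc hc_cont hc_inj Z R Δ hrect hbm3 hLeb
end
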